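/- The Fourier-Dedekind sum is a real rational number: for all positive integers n, a_1,…,a_d and b > 1 with gcd(a_i,b) = 1 for each i, the complex number s_n(a_1,…,a_d;b) = (1/b)·Σ_{k=1}^{b−1} ξ_b^{kn} / ∏_{i=1}^d (1 − ξ_b^{k a_i}) lies in ℚ. -/

import Mathlib

/-!
For a primitive `b`-th root of unity `ζ`, the Fourier–Dedekind sum is a sum over the nontrivial
`b`-th roots of unity `ω` of `ω ^ n / ∏ i, (1 - ω ^ a i)`, so it does not depend on the choice of
`ζ`. A Galois automorphism of the cyclotomic field `ℚ(ζ)` maps the sum for `ζ` to the sum for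
`σ ζ`, another primitive `b`-th root of unity; hence the sum is fixed by the Galois group and
lies in `ℚ`.
-/

open Complex Finset

/-- The primitive b-th root of unity. -/
noncomputable def xi (b : ℕ) : ℂ := Complex.exp (2 * Real.pi * Complex.I / b)

open Polynomial

theorem IsPrimitiveRoot.sum_Ico_pow_eq_sum_nthRootsFinset_erase_one {R M : Type*} [CommRing R]
    [IsDomain R] [DecidableEq R] [AddCommMonoid M] {ζ : R} {b : ℕ} (hζ : IsPrimitiveRoot ζ b)
    (g : R → M) :
    ∑ k ∈ Ico 1 b, g (ζ ^ k) = ∑ ω ∈ (nthRootsFinset b (1 : R)).erase 1, g ω := by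
  rcases b.eq_zero_or_pos with rfl | hb
  · simp
  have : NeZero b := ⟨hb.ne'⟩
  have mem_iff (ω : R) : ω ∈ (nthRootsFinset b (1 : R)).erase 1 ↔ ω ≠ 1 ∧ ω ^ b = 1 := by
    rw [mem_erase, Polynomial.mem_nthRootsFinset hb]
  refine sum_nbij (ζ ^ ·) (fun k hk => ?_) (fun k hk l hl hkl => ?_) (fun ω hω => ?_)
    fun _ _ => rfl
  · rw [mem_Ico] at hk
    rw [mem_iff, ← pow_mul, mul_comm, pow_mul, hζ.pow_eq_one, one_pow]
    exact ⟨hζ.pow_ne_one_of_pos_of_lt (by omega) hk.2, rfl⟩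
  · rw [coe_Ico, Set.mem_Ico] at hk hl
    exact hζ.pow_inj hk.2 hl.2 hkl
  · rw [mem_coe, mem_iff] at hω
    obtain ⟨k, hk, rfl⟩ := hζ.eq_pow_of_pow_eq_one hω.2
    refine ⟨k, ?_, rfl⟩
    rw [coe_Ico, Set.mem_Ico]
    refine ⟨Nat.one_le_iff_ne_zero.mpr ?_, hk⟩
    rintro rfl
    exact hω.1 (pow_zero ζ)

/-- `s_n(a_1, …, a_d; b)` of the paper, with `ξ_b` replaced by an arbitrary `ζ`; a term whose
denominator vanishes counts as `0`. -/
noncomputable def fourierDedekindSum {K : Type*} [Field K] {d : ℕ} (a : Fin d → ℕ) (n b : ℕ)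
    (ζ : K) : K :=
  1 / (b : K) * ∑ k ∈ Ico 1 b, ζ ^ (k * n) / ∏ i, (1 - ζ ^ (k * a i))

section

variable {K : Type*} [Field K] {d : ℕ} (a : Fin d → ℕ) (n b : ℕ)

theorem fourierDedekindSum_eq_sum_nthRootsFinset [DecidableEq K] {ζ : K}
    (hζ : IsPrimitiveRoot ζ b) :
    fourierDedekindSum a n b ζ =
      1 / (b : K) * ∑ ω ∈ (nthRootsFinset b (1 : K)).erase 1, ω ^ n / ∏ i, (1 - ω ^ a i) := by
  simp only [fourierDedekindSum, pow_mul]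
  rw [hζ.sum_Ico_pow_eq_sum_nthRootsFinset_erase_one fun ω => ω ^ n / ∏ i, (1 - ω ^ a i)]

theorem fourierDedekindSum_eq_of_isPrimitiveRoot {ζ η : K} (hζ : IsPrimitiveRoot ζ b)
    (hη : IsPrimitiveRoot η b) : fourierDedekindSum a n b ζ = fourierDedekindSum a n b η := by
  classical
  rw [fourierDedekindSum_eq_sum_nthRootsFinset a n b hζ,
    fourierDedekindSum_eq_sum_nthRootsFinset a n b hη]

theorem map_fourierDedekindSum {L F : Type*} [Field L] [FunLike F K L] [RingHomClass F K L]
    (f : F) (ζ : K) :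
    f (fourierDedekindSum a n b ζ) = fourierDedekindSum a n b (f ζ) := by
  simp [fourierDedekindSum]

theorem fourierDedekindSum_mem_range_algebraMap {F : Type*} [Field F] [Algebra F K]
    [FiniteDimensional F K] [IsGalois F K] {ζ : K} (hζ : IsPrimitiveRoot ζ b) :
    fourierDedekindSum a n b ζ ∈ Set.range (algebraMap F K) := by
  refine (IsGalois.mem_range_algebraMap_iff_fixed _).mpr fun σ => ?_
  rw [map_fourierDedekindSum]
  exact fourierDedekindSum_eq_of_isPrimitiveRoot a n b (hζ.map_of_injective σ.injective) hζ

end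

theorem stmt_5_general (d b n : ℕ) (a : Fin d → ℕ) :
    ∃ q : ℚ,
      (1 / b : ℂ) * ∑ k ∈ Finset.Ico 1 b,
        xi b ^ (k * n) / ∏ i, (1 - xi b ^ (k * a i)) = (q : ℂ) := by
  rcases b.eq_zero_or_pos with rfl | hb
  · exact ⟨0, by simp⟩
  have : NeZero b := ⟨hb.ne'⟩
  let F := IntermediateField.adjoin ℚ {x : ℂ | ∃ m ∈ ({b} : Set ℕ), m ≠ 0 ∧ x ^ m = 1}
  have : IsCyclotomicExtension {b} ℚ F :=
    IntermediateField.isCyclotomicExtension_adjoin_of_exists_isPrimitiveRoot _ _ _ fun m _ hm =>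
      ⟨_, Complex.isPrimitiveRoot_exp m hm⟩
  have : IsGalois ℚ F := IsCyclotomicExtension.isGalois {b} ℚ F
  have : FiniteDimensional ℚ F := IsCyclotomicExtension.finite_of_singleton b ℚ F
  have hζ := IsCyclotomicExtension.zeta_spec b ℚ F
  obtain ⟨q, hq⟩ := fourierDedekindSum_mem_range_algebraMap (F := ℚ) a n b hζ
  have hξ : IsPrimitiveRoot (xi b) b := Complex.isPrimitiveRoot_exp b hb.ne'
  refine ⟨q, ?_⟩
  change fourierDedekindSum a n b (xi b) = _
  rw [fourierDedekindSum_eq_of_isPrimitiveRoot a n b hξ (hζ.map_of_injective F.val.injective),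
    ← map_fourierDedekindSum, ← hq]
  simp

/-- The Fourier-Dedekind sum is a rational number. -/
theorem stmt_5 (d b n : ℕ) (hb : 1 < b) (hn : 0 < n) (a : Fin d → ℕ)
    (hapos : ∀ i, 0 < a i) (hcop : ∀ i, Nat.Coprime (a i) b) :
    ∃ q : ℚ,
      (1 / b : ℂ) * ∑ k ∈ Finset.Ico 1 b,
        xi b ^ (k * n) / ∏ i, (1 - xi b ^ (k * a i)) = (q : ℂ) :=
  stmt_5_general d b n a
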